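/- Define h_0 := 1, Q_0 := W_0, and for k = 1,…,n: h_k := ω_k h_{k-1} t (n−k+1)/(ω_{k-1} k (1−t) + ω_k h_{k-1} t (n−k+1)) and Q_k := (1 − h_k) Q_{k-1} + h_k W_k, where t ∈ (0,1). Then Q_n equals the rational Bézier curve value R_n(t) = (Σ_{k=0}^n ω_k W_k B^n_k(t))/(Σ_{k=0}^n ω_k B^n_k(t)). -/

import Mathlib

/-!
Write `a_k = ω_k B^n_k(t)` and `S_k = a_0 + ⋯ + a_k`. By induction, `h_k = a_k / S_k` and `Q_k` is
the `a`-weighted average of `W_0, …, W_k`: adding `W_k` to that average with relative weight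
`a_k / S_k` gives the next average. The Bernstein identity `k (1 - t) B^n_k = (n - k + 1) t B^n_{k-1}`
turns the recurrence for `h_k` into `h_k = r h_{k-1} / (1 + r h_{k-1})` with `r = a_k / a_{k-1}`,
which is exactly how the ratios `a_k / S_k` evolve.
-/

open Finset

/-- The Bernstein polynomial `B^n_k` evaluated at `t`. -/
def bern (n k : ℕ) (t : ℝ) : ℝ := (n.choose k : ℝ) * t ^ k * (1 - t) ^ (n - k)

theorem bern_pos {n k : ℕ} {t : ℝ} (hk : k ≤ n) (ht : t ∈ Set.Ioo (0 : ℝ) 1) :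
    0 < bern n k t := by
  have := Nat.choose_pos hk
  have := sub_pos.2 ht.2
  have := ht.1
  unfold bern
  positivity

theorem succ_mul_one_sub_mul_bern_succ (n k : ℕ) (t : ℝ) :
    ((k + 1 : ℕ) : ℝ) * (1 - t) * bern n (k + 1) t = ((n - k : ℕ) : ℝ) * t * bern n k t := by
  rcases lt_or_ge k n with hk | hk
  · have hchoose : (n.choose (k + 1) : ℝ) * ((k + 1 : ℕ) : ℝ) = n.choose k * ((n - k : ℕ) : ℝ) := by
      exact_mod_cast Nat.choose_succ_right_eq n k
    obtain ⟨m, hm⟩ : ∃ m, n - k = m + 1 := ⟨n - (k + 1), by omega⟩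
    have hm' : n - (k + 1) = m := by omega
    unfold bern
    rw [hm] at hchoose ⊢
    rw [hm', pow_succ, pow_succ]
    linear_combination t ^ k * t * (1 - t) ^ m * (1 - t) * hchoose
  · simp [bern, Nat.choose_eq_zero_of_lt (Nat.lt_succ_of_le hk), Nat.sub_eq_zero_of_le hk]

theorem mul_div_add_mul_div_eq {K : Type*} [Field K] {a b S : K} (ha : a ≠ 0) (hS : S ≠ 0) :
    b * (a / S) / (a + b * (a / S)) = b / (S + b) := by
  rw [show a + b * (a / S) = a / S * (S + b) by field_simp, mul_comm b,
    mul_div_mul_left _ _ (div_ne_zero ha hS)]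

theorem inv_smul_add_smul_eq {K V : Type*} [Field K] [AddCommGroup V] [Module K V] {S a : K}
    (hS : S ≠ 0) (hSa : S + a ≠ 0) (T w : V) :
    (1 - a / (S + a)) • S⁻¹ • T + (a / (S + a)) • w = (S + a)⁻¹ • (T + a • w) := by
  rw [smul_smul, smul_add, smul_smul, show (1 - a / (S + a)) * S⁻¹ = (S + a)⁻¹ by field_simp; ring,
    div_eq_inv_mul]

theorem eq_inv_sum_smul_of_recurrence {K V : Type*} [Field K] [LinearOrder K]
    [IsStrictOrderedRing K] [AddCommGroup V] [Module K V] {n : ℕ} {a h : ℕ → K} {W Q : ℕ → V}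
    (ha : ∀ k ≤ n, 0 < a k) (hh0 : h 0 = 1) (hQ0 : Q 0 = W 0)
    (hh : ∀ k < n, h (k + 1) = a (k + 1) * h k / (a k + a (k + 1) * h k))
    (hQ : ∀ k < n, Q (k + 1) = (1 - h (k + 1)) • Q k + h (k + 1) • W (k + 1)) :
    Q n = (∑ k ∈ range (n + 1), a k)⁻¹ • ∑ k ∈ range (n + 1), a k • W k := by
  have hS : ∀ k ≤ n, 0 < ∑ j ∈ range (k + 1), a j := fun k hk =>
    sum_pos (fun j hj => ha j (by grind)) nonempty_range_add_one
  suffices ∀ k ≤ n, h k = a k / ∑ j ∈ range (k + 1), a j ∧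
      Q k = (∑ j ∈ range (k + 1), a j)⁻¹ • ∑ j ∈ range (k + 1), a j • W j from (this n le_rfl).2
  intro k
  induction k with
  | zero =>
    intro hn
    have := (ha 0 hn).ne'
    simp [hh0, hQ0, smul_smul, this]
  | succ k ih =>
    intro hk
    obtain ⟨ihh, ihQ⟩ := ih (by omega)
    have hSk := (hS k (by omega)).ne'
    have hSk1 := (hS (k + 1) hk).ne'
    rw [sum_range_succ] at hSk1
    have hh' : h (k + 1) = a (k + 1) / ∑ j ∈ range (k + 1 + 1), a j := by
      rw [hh k hk, ihh, mul_div_add_mul_div_eq (ha k (by omega)).ne' hSk, sum_range_succ _ (k + 1)]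
    refine ⟨hh', ?_⟩
    rw [hQ k hk, ihQ, hh', sum_range_succ _ (k + 1), sum_range_succ _ (k + 1),
      inv_smul_add_smul_eq hSk hSk1]

theorem bern_ratio_recurrence_eq {n k : ℕ} (hk : k < n) {t : ℝ} (ht : t ∈ Set.Ioo (0 : ℝ) 1)
    (ω : ℕ → ℝ) (x : ℝ) :
    ω (k + 1) * x * t * ((n - (k + 1) + 1 : ℕ) : ℝ) /
        (ω k * ((k + 1 : ℕ) : ℝ) * (1 - t) + ω (k + 1) * x * t * ((n - (k + 1) + 1 : ℕ) : ℝ)) =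
      ω (k + 1) * bern n (k + 1) t * x /
        (ω k * bern n k t + ω (k + 1) * bern n (k + 1) t * x) := by
  have hB := (bern_pos hk.le ht).ne'
  have hc : ((k + 1 : ℕ) : ℝ) * (1 - t) ≠ 0 := mul_ne_zero (by positivity) (sub_pos.2 ht.2).ne'
  have hbern := succ_mul_one_sub_mul_bern_succ n k t
  rw [show n - (k + 1) + 1 = n - k by omega, ← mul_div_mul_left _ _ hB]
  conv_rhs => rw [← mul_div_mul_left _ _ hc]
  congr 1 <;> linear_combination -(ω (k + 1) * x) * hbern

theorem stmt10 (n d : ℕ) (t : ℝ) (ht : t ∈ Set.Ioo (0 : ℝ) 1)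
    (ω : ℕ → ℝ) (W : ℕ → Fin d → ℝ) (hω : ∀ k ≤ n, 0 < ω k)
    (h : ℕ → ℝ) (Q : ℕ → Fin d → ℝ)
    (hh0 : h 0 = 1) (hQ0 : Q 0 = W 0)
    (hh : ∀ k, 1 ≤ k → k ≤ n →
      h k = ω k * h (k - 1) * t * ((n - k + 1 : ℕ) : ℝ) /
        (ω (k - 1) * (k : ℝ) * (1 - t) +
          ω k * h (k - 1) * t * ((n - k + 1 : ℕ) : ℝ)))
    (hQ : ∀ k, 1 ≤ k → k ≤ n → Q k = (1 - h k) • Q (k - 1) + h k • W k) :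
    Q n = (∑ k ∈ range (n + 1), ω k * bern n k t)⁻¹ •
        ∑ k ∈ range (n + 1), (ω k * bern n k t) • W k := by
  refine eq_inv_sum_smul_of_recurrence (fun k hk => mul_pos (hω k hk) (bern_pos hk ht))
    hh0 hQ0 (fun k hk => ?_) (fun k hk => hQ (k + 1) (by omega) hk)
  rw [hh (k + 1) (by omega) hk, Nat.add_sub_cancel, bern_ratio_recurrence_eq hk ht]
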